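/- arXiv:1911.07650 — 6 statements merged into one kernel-verified Lean document; each statement's English description precedes it below -/
import Mathlib

section
/- Let α ∈ ℤ_{≥0}^n. If β ∈ ℤ_{≥0}^n is an exponent vector of the key polynomial κ_α(x), then β ≤_κ α. -/
/-!
Induct on the weight `∑ m, m * α m`. If `α` is weakly decreasing, `κ α = x^α`. Otherwise pick
`i` with `α i < α (i+1)`; then `α' = α ∘ swap i (i+1)` has smaller weight, and writing
`κ α' = ∑ c_d x^d`, the recursion gives `κ α = ∑ c_d ∂_i (x_i x^d)`. Each `∂_i (x_i x^d)` is a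
telescoping sum of monomials whose exponents lie on the lattice segment from `d` to `s_i d`, so
every exponent of `κ α` lies on such a segment for some exponent `d ≤_κ α'` of `κ α'`.

Every point of that segment is reached by moves from whichever endpoint is increasing at
`(i, i+1)`, so it suffices that `d ≤_κ α'` implies `s_i d ≤_κ α`. This goes by induction on the
chain of moves from `α'`: a move on the pair `(i, i+1)` stays on the segment, and any other move
commutes with `s_i`, because swapping adjacent positions preserves the relative order of every
other pair of positions.
-/

open MvPolynomial in
/-- The operator `s_i` (here general `s_{i,j}`): exchange the variables `x i` and `x j`
in a polynomial. -/
noncomputable def swapVars (n : ℕ) (i j : Fin n) (f : MvPolynomial (Fin n) ℤ) :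
    MvPolynomial (Fin n) ℤ :=
  MvPolynomial.rename (Equiv.swap i j) f

open MvPolynomial in
/-- `κ` is the family of key polynomials: if `α` is weakly decreasing then
`κ α = x^α`; otherwise, if `α i < α (i+1)` and `α'` is obtained from `α` by exchanging
these two parts, then `κ α = ∂_i (x_i * κ α')`, which is equivalently recorded by
`(x_i - x_{i+1}) * κ α = x_i * κ α' - s_i (x_i * κ α')`. -/
def IsKeyFamily (n : ℕ) (κ : (Fin n → ℕ) → MvPolynomial (Fin n) ℤ) : Prop :=
  (∀ α : Fin n → ℕ, (∀ i j : Fin n, i ≤ j → α j ≤ α i) → κ α = ∏ i, X i ^ α i) ∧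
  (∀ (α : Fin n → ℕ) (i j : Fin n), (i : ℕ) + 1 = (j : ℕ) → α i < α j →
    (X i - X j) * κ α =
      X i * κ (α ∘ Equiv.swap i j) - swapVars n i j (X i * κ (α ∘ Equiv.swap i j)))

/-- One move generating the order `≤_κ`: from `γ` we may pass to `t_{i,j} γ`
(exchange the `i`-th and `j`-th entries) provided `γ i < γ j`, or to
`m_{i,j} γ = γ + e_i - e_j` provided `γ i < γ j - 1`. -/
def KeyStep (n : ℕ) (γ δ : Fin n → ℕ) : Prop :=
  ∃ i j : Fin n, i < j ∧
    ((γ i < γ j ∧ δ = γ ∘ Equiv.swap i j) ∨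
     (γ i + 1 < γ j ∧
       δ = Function.update (Function.update γ i (γ i + 1)) j (γ j - 1)))

/-- `β ≤_κ α` : `β` is obtained from `α` by a finite sequence of moves. -/
def KeyLe (n : ℕ) (β α : Fin n → ℕ) : Prop :=
  Relation.ReflTransGen (KeyStep n) α β

open Equiv
open Function hiding swap

section Moves

variable {n : ℕ} {i j k l : Fin n} {α β γ δ : Fin n → ℕ}

def KeyMove (k l : Fin n) (γ δ : Fin n → ℕ) : Prop :=
  (γ k < γ l ∧ δ = γ ∘ swap k l) ∨
    (γ k + 1 < γ l ∧ δ = update (update γ k (γ k + 1)) l (γ l - 1))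

theorem KeyLe.of_keyMove (hkl : k < l) (h : KeyMove k l γ δ) : KeyLe n δ γ :=
  .single ⟨k, l, hkl, h⟩

theorem KeyLe.refl (α : Fin n → ℕ) : KeyLe n α α := Relation.ReflTransGen.refl

theorem KeyLe.trans (h₁ : KeyLe n β γ) (h₂ : KeyLe n γ α) : KeyLe n β α :=
  Relation.ReflTransGen.trans h₂ h₁

theorem KeyMove.comp_perm (h : KeyMove k l γ δ) (σ : Perm (Fin n)) :
    KeyMove (σ.symm k) (σ.symm l) (γ ∘ σ) (δ ∘ σ) := by
  rcases h with ⟨hlt, rfl⟩ | ⟨hlt, rfl⟩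
  · refine .inl ⟨by simpa using hlt, ?_⟩
    simp [comp_swap_eq_update, update_comp_equiv]
  · refine .inr ⟨by simpa using hlt, ?_⟩
    simp [update_comp_equiv]

theorem swap_apply_lt_swap_apply (hij : (i : ℕ) + 1 = j) (hkl : k < l)
    (hne : ¬(k = i ∧ l = j)) : swap i j k < swap i j l := by
  rw [Fin.lt_def] at hkl ⊢
  simp only [swap_apply_def]
  split_ifs <;> simp only [Fin.ext_iff] at * <;> omega

end Moves

section Segment

variable {ι : Type*} {i j : ι} {γ β : ι → ℕ}

/-- `β` is a lattice point of the segment from `γ` to `γ ∘ swap i j`. -/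
def OnSegment (i j : ι) (γ β : ι → ℕ) : Prop :=
  (∀ m, m ≠ i → m ≠ j → β m = γ m) ∧ β i + β j = γ i + γ j ∧
    min (γ i) (γ j) ≤ β i ∧ β i ≤ max (γ i) (γ j)

theorem onSegment_refl (i j : ι) (γ : ι → ℕ) : OnSegment i j γ γ :=
  ⟨fun _ _ _ => rfl, rfl, min_le_left _ _, le_max_left _ _⟩

variable [DecidableEq ι]

theorem OnSegment.eq_of_apply_eq (hij : i ≠ j) (h : OnSegment i j γ β) (hi : β i = γ i) :
    β = γ := by
  obtain ⟨hoff, hsum, -⟩ := h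
  funext m
  by_cases hmi : m = i
  · subst hmi; exact hi
  by_cases hmj : m = j
  · subst hmj; omega
  exact hoff m hmi hmj

theorem OnSegment.comp_swap_right (h : OnSegment i j γ β) :
    OnSegment i j γ (β ∘ swap i j) := by
  obtain ⟨hoff, hsum, hmin, hmax⟩ := h
  refine ⟨fun m hmi hmj => ?_, ?_, ?_, ?_⟩
  · simpa [swap_apply_of_ne_of_ne hmi hmj] using hoff m hmi hmj
  all_goals simp only [comp_apply, swap_apply_left, swap_apply_right]; omega

theorem OnSegment.comp_swap_left (h : OnSegment i j γ β) :
    OnSegment i j (γ ∘ swap i j) β := by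
  obtain ⟨hoff, hsum, hmin, hmax⟩ := h
  refine ⟨fun m hmi hmj => ?_, ?_, ?_, ?_⟩
  · simpa [swap_apply_of_ne_of_ne hmi hmj] using hoff m hmi hmj
  all_goals simp only [comp_apply, swap_apply_left, swap_apply_right]; omega

end Segment

section Reach

variable {n : ℕ} {i j : Fin n} {α β γ δ : Fin n → ℕ}

theorem KeyMove.onSegment (h : KeyMove i j γ δ) (hij : i ≠ j) : OnSegment i j γ δ := by
  rcases h with ⟨-, rfl⟩ | ⟨hlt, rfl⟩
  · exact (onSegment_refl i j γ).comp_swap_right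
  · refine ⟨fun m hmi hmj => by simp [hmi, hmj], ?_, ?_, ?_⟩ <;> simp [hij] <;> omega

theorem keyLe_of_onSegment_of_le (hij : i < j) (h : OnSegment i j γ β) (hγ : γ i ≤ β i)
    (hβ : β i ≤ β j) : KeyLe n β γ := by
  induction hk : β i - γ i generalizing γ with
  | zero => exact (h.eq_of_apply_eq hij.ne (by omega)) ▸ KeyLe.refl _
  | succ _ ih =>
    obtain ⟨hoff, hsum, -⟩ := h
    have hmove : KeyMove i j γ (update (update γ i (γ i + 1)) j (γ j - 1)) :=
      .inr ⟨by omega, rfl⟩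
    refine (ih ⟨fun m hmi hmj => ?_, ?_, ?_, ?_⟩ ?_ ?_).trans (.of_keyMove hij hmove)
    · simp [hmi, hmj, hoff m hmi hmj]
    all_goals simp [hij.ne]; omega

theorem keyLe_of_onSegment (hij : i < j) (h : OnSegment i j γ β) (hγ : γ i ≤ γ j) :
    KeyLe n β γ := by
  by_cases hβ : β i ≤ β j
  · exact keyLe_of_onSegment_of_le hij h (by simpa [hγ] using h.2.2.1) hβ
  · have hmove : KeyMove i j (β ∘ swap i j) β :=
      .inl ⟨by simp; omega, by funext m; simp [swap_apply_self]⟩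
    refine .trans (.of_keyMove hij hmove) (keyLe_of_onSegment_of_le hij h.comp_swap_right ?_ ?_)
    all_goals obtain ⟨-, hsum, -, hmax⟩ := h; simp; omega

theorem OnSegment.keyLe_or (hij : i < j) (h : OnSegment i j γ β) :
    KeyLe n β γ ∨ KeyLe n β (γ ∘ swap i j) := by
  rcases le_total (γ i) (γ j) with hγ | hγ
  · exact .inl (keyLe_of_onSegment hij h hγ)
  · exact .inr (keyLe_of_onSegment hij h.comp_swap_left (by simpa using hγ))

theorem keyLe_comp_swap_self (hij : i < j) (hα : α i < α j) : KeyLe n (α ∘ swap i j) α :=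
  .of_keyMove hij (.inl ⟨hα, rfl⟩)

theorem keyLe_comp_swap_of_keyLe_comp_swap (hij : (i : ℕ) + 1 = j) (hα : α i < α j)
    (hδ : KeyLe n δ (α ∘ swap i j)) : KeyLe n (δ ∘ swap i j) α := by
  induction hδ with
  | refl => convert KeyLe.refl α using 2; funext m; simp [swap_apply_self]
  | @tail γ δ hγ hstep ih =>
    obtain ⟨k, l, hkl, hmove : KeyMove k l γ δ⟩ := hstep
    by_cases hpair : k = i ∧ l = j
    · obtain ⟨rfl, rfl⟩ := hpair
      rcases (hmove.onSegment hkl.ne).comp_swap_right.keyLe_or hkl with h | h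
      · exact h.trans (KeyLe.trans hγ (keyLe_comp_swap_self hkl hα))
      · exact h.trans ih
    · have hmove' := hmove.comp_perm (swap i j)
      rw [symm_swap] at hmove'
      exact (KeyLe.of_keyMove (swap_apply_lt_swap_apply hij hkl hpair) hmove').trans ih

theorem keyLe_of_onSegment_of_keyLe_comp_swap (hij : (i : ℕ) + 1 = j) (hα : α i < α j)
    (hδ : KeyLe n δ (α ∘ swap i j)) (hβ : OnSegment i j δ β) : KeyLe n β α := by
  have hlt : i < j := by rw [Fin.lt_def]; omega
  rcases hβ.keyLe_or hlt with h | h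
  · exact h.trans (hδ.trans (keyLe_comp_swap_self hlt hα))
  · exact h.trans (keyLe_comp_swap_of_keyLe_comp_swap hij hα hδ)

end Reach

section DividedDifference

open MvPolynomial

variable {σ R : Type*} [CommRing R] [DecidableEq σ] {i j : σ}

theorem X_mul_monomial_update_update_left (hij : i ≠ j) (d : σ →₀ ℕ) (a b : ℕ) :
    X i * monomial ((d.update i a).update j b) (1 : R) =
      monomial ((d.update i (a + 1)).update j b) 1 := by
  rw [X, monomial_mul, one_mul]
  refine congrArg (monomial · 1) (Finsupp.ext fun m => ?_)
  by_cases hmj : m = j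
  · subst hmj; simp [hij]
  · by_cases hmi : m = i
    · subst hmi; simp [hmj]; omega
    · simp [hmi, hmj]

theorem X_mul_monomial_update_update_right (d : σ →₀ ℕ) (a b : ℕ) :
    X j * monomial ((d.update i a).update j b) (1 : R) =
      monomial ((d.update i a).update j (b + 1)) 1 := by
  rw [X, monomial_mul, one_mul]
  refine congrArg (monomial · 1) (Finsupp.ext fun m => ?_)
  by_cases hmj : m = j
  · subst hmj; simp; omega
  · simp [hmj]

theorem exists_X_sub_X_mul_eq_monomial (hij : i ≠ j) (d : σ →₀ ℕ) :
    ∃ Q ∈ restrictSupport R {β | OnSegment i j d β},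
      (X i - X j) * Q = X i * monomial d 1 - rename (swap i j) (X i * monomial d 1) := by
  set s := d i + d j
  let e : ℕ → σ →₀ ℕ := fun a => (d.update i a).update j (s + 1 - a)
  have htele : ∀ lo hi, lo ≤ hi → hi ≤ s + 1 →
      (X i - X j) * ∑ a ∈ Finset.Ico lo hi, monomial ((d.update i a).update j (s - a)) (1 : R) =
        monomial (e hi) 1 - monomial (e lo) 1 := by
    intro lo hi hlo hhi
    rw [Finset.mul_sum, ← Finset.sum_Ico_sub (fun a => monomial (e a) (1 : R)) hlo]
    refine Finset.sum_congr rfl fun a ha => ?_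
    rw [Finset.mem_Ico] at ha
    rw [sub_mul, X_mul_monomial_update_update_left hij, X_mul_monomial_update_update_right]
    simp only [e]
    congr 4 <;> omega
  have hleft : X i * monomial d (1 : R) = monomial (e (d i + 1)) 1 := by
    have he : e (d i + 1) = (d.update i (d i + 1)).update j (d j) := by
      simp only [e, s]; congr 1; omega
    rw [he, ← X_mul_monomial_update_update_left hij, Finsupp.update_self, Finsupp.update_self]
  have hright : rename (swap i j) (X i * monomial d (1 : R)) = monomial (e (d j)) 1 := by
    rw [hleft, rename_monomial]
    refine congrArg (monomial · 1) (Finsupp.ext fun m => ?_)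
    rw [Finsupp.mapDomain_equiv_apply, symm_swap]
    simp only [e, Finsupp.coe_update, update_apply, swap_apply_def]
    split_ifs <;> simp_all <;> omega
  have hmem : ∀ lo hi, min (d i) (d j) ≤ lo → hi ≤ max (d i) (d j) + 1 →
      ∑ a ∈ Finset.Ico lo hi, monomial ((d.update i a).update j (s - a)) (1 : R) ∈
        restrictSupport R {β | OnSegment i j d β} := by
    refine fun lo hi hlo hhi => Submodule.sum_mem _ fun a ha => ?_
    rw [Finset.mem_Ico] at ha
    refine (monomial_mem_restrictSupport R).2 (.inl ⟨fun m hmi hmj => ?_, ?_, ?_, ?_⟩)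
    · simp [hmi, hmj]
    all_goals simp [hij]; omega
  rcases le_or_gt (d j) (d i + 1) with h | h
  · refine ⟨_, hmem (d j) (d i + 1) (by omega) (by omega), ?_⟩
    rw [htele _ _ h (by omega), hright, hleft]
  · refine ⟨_, neg_mem (hmem (d i + 1) (d j) (by omega) (by omega)), ?_⟩
    rw [mul_neg, htele _ _ h.le (by omega), hright, hleft, neg_sub]

theorem exists_X_sub_X_mul_eq (hij : i ≠ j) {D : Set (σ →₀ ℕ)} {g : MvPolynomial σ R}
    (hg : g ∈ restrictSupport R D) :
    ∃ Q ∈ restrictSupport R {β | ∃ d ∈ D, OnSegment i j d β},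
      (X i - X j) * Q = X i * g - rename (swap i j) (X i * g) := by
  rw [restrictSupport_eq_span] at hg
  induction hg using Submodule.span_induction with
  | mem _ hd =>
    obtain ⟨d, hd, rfl⟩ := hd
    obtain ⟨Q, hQ, hQeq⟩ := exists_X_sub_X_mul_eq_monomial (R := R) hij d
    exact ⟨Q, restrictSupport_mono R (fun β hβ => by exact ⟨d, hd, hβ⟩) hQ, hQeq⟩
  | zero => exact ⟨0, zero_mem _, by simp⟩
  | add _ _ _ _ h₁ h₂ =>
    obtain ⟨Q₁, hQ₁, h₁⟩ := h₁
    obtain ⟨Q₂, hQ₂, h₂⟩ := h₂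
    exact ⟨Q₁ + Q₂, add_mem hQ₁ hQ₂, by rw [mul_add, h₁, h₂, mul_add, map_add]; abel⟩
  | smul c _ _ h =>
    obtain ⟨Q, hQ, h⟩ := h
    refine ⟨c • Q, Submodule.smul_mem _ c hQ, ?_⟩
    rw [mul_smul_comm, h, mul_smul_comm, map_smul, smul_sub]

theorem exists_onSegment_of_X_sub_X_mul_eq [IsDomain R] (hij : i ≠ j)
    {p g : MvPolynomial σ R} (h : (X i - X j) * p = X i * g - rename (swap i j) (X i * g))
    {β : σ →₀ ℕ} (hβ : β ∈ p.support) : ∃ d ∈ g.support, OnSegment i j d β := by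
  obtain ⟨Q, hQ, hQeq⟩ := exists_X_sub_X_mul_eq hij ((mem_restrictSupport_iff R).2 subset_rfl)
  have hX : (X i - X j : MvPolynomial σ R) ≠ 0 := sub_ne_zero.2 (X_injective.ne hij)
  obtain rfl : p = Q := mul_left_cancel₀ hX (h.trans hQeq.symm)
  exact hQ hβ

end DividedDifference

open MvPolynomial in
theorem eq_of_coeff_prod_X_pow_ne_zero {σ R : Type*} [Fintype σ] [CommSemiring R] {α β : σ → ℕ}
    (h : coeff (Finsupp.equivFunOnFinite.symm β) (∏ i, X i ^ α i : MvPolynomial σ R) ≠ 0) :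
    β = α := by
  classical
  have : (∏ i, X i ^ α i : MvPolynomial σ R) = monomial (Finsupp.equivFunOnFinite.symm α) 1 := by
    simp [monomial_eq, Finsupp.prod_fintype]
  rw [this, coeff_monomial, ite_ne_right_iff] at h
  exact (Finsupp.equivFunOnFinite.symm.injective h.1).symm

theorem Fin.exists_lt_succ_of_not_antitone {n : ℕ} {α : Fin n → ℕ} (h : ¬Antitone α) :
    ∃ i j : Fin n, (i : ℕ) + 1 = j ∧ α i < α j := by
  cases n with
  | zero => exact absurd (fun a => a.elim0) h
  | succ n =>
    rw [Fin.antitone_iff_succ_le] at h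
    simp only [not_forall, not_le] at h
    obtain ⟨i, hi⟩ := h
    exact ⟨i.castSucc, i.succ, by simp, hi⟩

theorem sum_mul_comp_swap_lt {n : ℕ} {i j : Fin n} {α : Fin n → ℕ} (hij : i < j)
    (hα : α i < α j) :
    ∑ m : Fin n, (m : ℕ) * (α ∘ swap i j) m < ∑ m : Fin n, (m : ℕ) * α m := by
  have hreindex :
      ∑ m : Fin n, (m : ℕ) * (α ∘ swap i j) m = ∑ m : Fin n, (swap i j m : ℕ) * α m := by
    rw [← Equiv.sum_comp (swap i j)]
    simp [swap_apply_self]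
  have hdiff : ∑ m : Fin n, ((m : ℤ) - (swap i j m : ℕ)) * α m = ((j : ℤ) - i) * (α j - α i) := by
    rw [Fintype.sum_eq_add i j hij.ne fun m hm => by simp [swap_apply_of_ne_of_ne hm.1 hm.2]]
    simp only [swap_apply_left, swap_apply_right]
    ring
  have hpos : 0 < ((j : ℤ) - i) * (α j - α i) :=
    mul_pos (sub_pos.2 (by exact_mod_cast hij)) (sub_pos.2 (by exact_mod_cast hα))
  rw [hreindex]
  zify
  simp only [sub_mul, Finset.sum_sub_distrib] at hdiff
  linarith

theorem keyLe_of_exponent_vector_general (n : ℕ)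
    (κ : (Fin n → ℕ) → MvPolynomial (Fin n) ℤ) (hκ : IsKeyFamily n κ)
    (α β : Fin n → ℕ)
    (hβ : MvPolynomial.coeff (Finsupp.equivFunOnFinite.symm β) (κ α) ≠ 0) :
    KeyLe n β α := by
  induction hw : ∑ m : Fin n, (m : ℕ) * α m using Nat.strong_induction_on generalizing α β with
  | _ w ih =>
    by_cases hanti : Antitone α
    · rw [hκ.1 α hanti] at hβ
      obtain rfl := eq_of_coeff_prod_X_pow_ne_zero hβ
      exact KeyLe.refl β
    · obtain ⟨i, j, hij, hα⟩ := Fin.exists_lt_succ_of_not_antitone hanti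
      have hlt : i < j := by rw [Fin.lt_def]; omega
      obtain ⟨d, hd, hseg⟩ := exists_onSegment_of_X_sub_X_mul_eq hlt.ne (hκ.2 α i j hij hα)
        (Finsupp.mem_support_iff.2 hβ)
      have hδ : KeyLe n d (α ∘ swap i j) :=
        ih _ (hw ▸ sum_mul_comp_swap_lt hlt hα) _ _ (by simpa using hd) rfl
      exact keyLe_of_onSegment_of_keyLe_comp_swap hij hα hδ hseg

/-- If `β` is an exponent vector of the key polynomial `κ α`, then `β ≤_κ α`. -/
theorem keyLe_of_exponent_vector (n : ℕ) (hn : 1 ≤ n)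
    (κ : (Fin n → ℕ) → MvPolynomial (Fin n) ℤ) (hκ : IsKeyFamily n κ)
    (α β : Fin n → ℕ)
    (hβ : MvPolynomial.coeff (Finsupp.equivFunOnFinite.symm β) (κ α) ≠ 0) :
    KeyLe n β α :=
  keyLe_of_exponent_vector_general n κ hκ α β hβ
end

section
/- Let D be any diagram of the n×n grid and let F be a column-strict flagged filling of D. Then there exists a column-strict flagged filling G of D such that for each column m, the set of entries in column m of G equals the set of entries in column m of F (in particular wt(G) = wt(F)), and such that for each column m and each entry v appearing in column m of G with v ∈ D_m, the box (v,m) of G is filled with v. -/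
/-!
Columns can be treated one at a time, and within a column only the entries are permuted.
Suppose box `i` holds `v`, `v` is also a box of the column, but box `v` does not hold `v`.
Swapping the entries of boxes `i` and `v` puts `v` into box `v`, and box `i` receives the old
entry of box `v`, which is at most `v ≤ i`, so the filling stays flagged. The number of boxes
not holding their own row index drops, so iterating the swap terminates.
-/

open Finset

/-- The set `F(D)` of column-strict flagged fillings of the diagram `D`: a filling
assigns to each box `(i, j)` of `D` a value in `Fin n` (the value `v` standing for the
positive integer `v + 1`), the entries in each column are distinct (column-strict), and
the entry in a box in row `i` is at most `i` (flagged). -/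
def Fillings (n : ℕ) (D : Fin n → Finset (Fin n)) :
    Set ((j : Fin n) → {i : Fin n // i ∈ D j} → Fin n) :=
  {F | (∀ j, Function.Injective (F j)) ∧
       ∀ (j : Fin n) (i : {i : Fin n // i ∈ D j}), F j i ≤ (i : Fin n)}

/-- The weight of a filling: `wt n D F k` is the number of entries of `F` equal to `k`. -/
def wt (n : ℕ) (D : Fin n → Finset (Fin n))
    (F : (j : Fin n) → {i : Fin n // i ∈ D j} → Fin n) : Fin n → ℕ :=
  fun k => ∑ j, ((D j).attach.filter fun i => F j i = k).card

namespace Column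

variable {α : Type*} {S : Finset α}

def IsFlagged [LE α] (f : S → α) : Prop := ∀ i, f i ≤ i

def IsOptimized (f : S → α) : Prop := ∀ i (hv : f i ∈ S), f ⟨f i, hv⟩ = f i

lemma image_attach_comp_perm {β : Type*} [DecidableEq β] (f : S → β) (σ : Equiv.Perm S) :
    S.attach.image (f ∘ σ) = S.attach.image f := by
  ext b
  simp only [mem_image, mem_attach, true_and, Function.comp_apply]
  exact (σ.surjective.exists (p := fun a => f a = b)).symm

lemma card_filter_attach_comp_perm {β : Type*} [DecidableEq β] (f : S → β) (σ : Equiv.Perm S)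
    (k : β) : #(S.attach.filter fun i => f (σ i) = k) = #(S.attach.filter fun i => f i = k) := by
  rw [← univ_eq_attach, ← card_map σ.toEmbedding]
  congr 1
  ext b
  simp

variable [DecidableEq α]

lemma isFlagged_comp_swap [Preorder α] {f : S → α} (hf : IsFlagged f) {i v : S}
    (hiv : f i = v) : IsFlagged (f ∘ Equiv.swap i v) := by
  intro b
  rcases eq_or_ne b i with rfl | hbi
  · calc f (Equiv.swap b v b) = f v := by rw [Equiv.swap_apply_left]
      _ ≤ v := hf v
      _ = f b := hiv.symm
      _ ≤ b := hf b
  rcases eq_or_ne b v with rfl | hbv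
  · simp [hiv]
  · simpa [Equiv.swap_apply_of_ne_of_ne hbi hbv] using hf b

lemma card_nonfixed_comp_swap_lt {f : S → α} {i v : S} (hiv : f i = v) (hv : f v ≠ v) :
    #{b | (f ∘ Equiv.swap i v) b ≠ b} < #{b | f b ≠ b} := by
  have hvi : v ≠ i := by
    rintro rfl
    exact hv hiv
  have hsub : ({b | (f ∘ Equiv.swap i v) b ≠ b} : Finset S) ⊆
      ({b | f b ≠ b} : Finset S).erase v := by
    intro b hb
    simp only [mem_filter, mem_univ, true_and, mem_erase, Function.comp_apply] at hb ⊢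
    rcases eq_or_ne b i with rfl | hbi
    · exact ⟨hvi.symm, fun h => hvi (Subtype.ext (hiv.symm.trans h))⟩
    rcases eq_or_ne b v with rfl | hbv
    · simp [hiv] at hb
    · exact ⟨hbv, by rwa [Equiv.swap_apply_of_ne_of_ne hbi hbv] at hb⟩
  exact (card_le_card hsub).trans_lt (card_erase_lt_of_mem (by simpa using hv))

theorem exists_perm_isFlagged_isOptimized [Preorder α] (f : S → α) (hf : IsFlagged f) :
    ∃ σ : Equiv.Perm S, IsFlagged (f ∘ σ) ∧ IsOptimized (f ∘ σ) := by
  induction h : #{b | f b ≠ b} using Nat.strong_induction_on generalizing f with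
  | _ N ih =>
  by_cases hopt : IsOptimized f
  · exact ⟨1, hf, hopt⟩
  obtain ⟨i, hv, hne⟩ : ∃ i, ∃ hv : f i ∈ S, f ⟨f i, hv⟩ ≠ f i := by
    simpa [IsOptimized] using hopt
  have hlt := card_nonfixed_comp_swap_lt (f := f) (v := ⟨f i, hv⟩) rfl hne
  rw [h] at hlt
  obtain ⟨σ, hσ⟩ := ih _ hlt _ (isFlagged_comp_swap hf rfl) rfl
  exact ⟨Equiv.swap i ⟨f i, hv⟩ * σ, hσ⟩

end Column

theorem exists_optimization_general (n : ℕ) (D : Fin n → Finset (Fin n))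
    (F : (j : Fin n) → {i : Fin n // i ∈ D j} → Fin n) (hF : F ∈ Fillings n D) :
    ∃ G ∈ Fillings n D,
      (∀ m : Fin n, (D m).attach.image (G m) = (D m).attach.image (F m)) ∧
      wt n D G = wt n D F ∧
      ∀ (m : Fin n) (i : {i : Fin n // i ∈ D m}) (hv : G m i ∈ D m),
        G m ⟨G m i, hv⟩ = G m i := by
  obtain ⟨hinj, hflag⟩ := hF
  choose σ hσflag hσopt using fun m => Column.exists_perm_isFlagged_isOptimized (F m) (hflag m)
  refine ⟨fun m => F m ∘ σ m, ⟨fun m => (hinj m).comp (σ m).injective, hσflag⟩,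
    fun m => Column.image_attach_comp_perm _ _, ?_, hσopt⟩
  funext k
  exact sum_congr rfl fun m _ => Column.card_filter_attach_comp_perm _ _ _

/-- Optimization of a filling: for every column-strict flagged filling `F` of a diagram
`D` there is a column-strict flagged filling `G` of `D` which, column by column, uses the
same set of entries as `F` (so in particular `wt G = wt F`), and such that whenever an
entry `v` appears in column `m` of `G` and `v ∈ D m` (i.e. the box `(v, m)` is a box of
`D`), the box `(v, m)` of `G` is filled with `v`. -/
theorem exists_optimization (n : ℕ) (hn : 1 ≤ n) (D : Fin n → Finset (Fin n))
    (F : (j : Fin n) → {i : Fin n // i ∈ D j} → Fin n) (hF : F ∈ Fillings n D) :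
    ∃ G ∈ Fillings n D,
      (∀ m : Fin n, (D m).attach.image (G m) = (D m).attach.image (F m)) ∧
      wt n D G = wt n D F ∧
      ∀ (m : Fin n) (i : {i : Fin n // i ∈ D m}) (hv : G m i ∈ D m),
        G m ⟨G m i, hv⟩ = G m i :=
  exists_optimization_general n D F hF
end

section
/- Let α ∈ ℤ_{≥0}^n be a composition and F a column-strict flagged filling of the skyline diagram D(α) with weight wt(F) = (v_1,…,v_n). If 1 ≤ i < j ≤ n and v_i < v_j, then there exists a column-strict flagged filling F' of D(α) with wt(F') = t_{i,j}(wt(F)). -/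
/-- `R ≤ S` for subsets of `[n]`: they have the same size and for each `k`, the
`k`-th smallest element of `R` is at most the `k`-th smallest element of `S`. -/
def FinsetLe (n : ℕ) (R S : Finset (Fin n)) : Prop :=
  R.card = S.card ∧
    ∀ (k : ℕ) (hR : k < (R.sort (· ≤ ·)).length) (hS : k < (S.sort (· ≤ ·)).length),
      (R.sort (· ≤ ·)).get ⟨k, hR⟩ ≤ (S.sort (· ≤ ·)).get ⟨k, hS⟩

/-- `C ≤ D` for diagrams (columnwise comparison of the column sets). -/
def DiagramLe (n : ℕ) (C D : Fin n → Finset (Fin n)) : Prop :=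
  ∀ j, FinsetLe n (C j) (D j)

/-- The skyline diagram of a composition `α`: column `j` (0-indexed) consists of the
rows `i` with `α i ≥ j + 1`; i.e. row `i` consists of the first `α i` boxes. -/
def skyline (n : ℕ) (α : Fin n → ℕ) : Fin n → Finset (Fin n) :=
  fun j => Finset.univ.filter fun i => (j : ℕ) < α i

/-! Call a column *good* if it contains the entry `j` but not the entry `i`. Since a column
holds each value at most once, `v_j ≤ #(good columns) + v_i`. Exchanging the values `i` and `j`
in exactly `v_j - v_i` good columns keeps the columns injective, keeps the flag because the only
entry that changes is a `j` becoming the smaller `i`, and exchanges the weights `v_i` and `v_j`. -/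

open Finset

theorem Finset.sum_le_card_filter_add_sum {ι : Type*} [Fintype ι]
    (f g : ι → ℕ) (hf : ∀ c, f c ≤ 1) :
    ∑ c, f c ≤ #{c | f c = 1 ∧ g c = 0} + ∑ c, g c :=
  calc ∑ c, f c ≤ ∑ c, ((if f c = 1 ∧ g c = 0 then 1 else 0) + g c) :=
        sum_le_sum fun c _ => by have := hf c; split_ifs with h <;> omega
    _ = #{c | f c = 1 ∧ g c = 0} + ∑ c, g c := by rw [sum_add_distrib, sum_boole, Nat.cast_id]

variable {n : ℕ} {D : Fin n → Finset (Fin n)}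

def colCount (F : (j : Fin n) → {i : Fin n // i ∈ D j} → Fin n) (k c : Fin n) : ℕ :=
  #{x ∈ (D c).attach | F c x = k}

theorem wt_eq_sum_colCount (F : (j : Fin n) → {i : Fin n // i ∈ D j} → Fin n) (k : Fin n) :
    wt n D F k = ∑ c, colCount F k c :=
  rfl

theorem colCount_le_one {F : (j : Fin n) → {i : Fin n // i ∈ D j} → Fin n}
    (hF : ∀ c, Function.Injective (F c)) (k c : Fin n) : colCount F k c ≤ 1 :=
  card_le_one.mpr fun _ hx _ hy => hF c ((mem_filter.mp hx).2.trans (mem_filter.mp hy).2.symm)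

theorem colCount_eq_zero {F : (j : Fin n) → {i : Fin n // i ∈ D j} → Fin n} {k c : Fin n} :
    colCount F k c = 0 ↔ ∀ x, F c x ≠ k := by
  simp [colCount, filter_eq_empty_iff]

def swapIn (S : Finset (Fin n)) (a b : Fin n)
    (F : (j : Fin n) → {i : Fin n // i ∈ D j} → Fin n) :
    (j : Fin n) → {i : Fin n // i ∈ D j} → Fin n :=
  fun c x => if c ∈ S then Equiv.swap a b (F c x) else F c x

theorem swapIn_mem {S : Finset (Fin n)} {a b : Fin n}
    {F : (j : Fin n) → {i : Fin n // i ∈ D j} → Fin n} (hF : F ∈ Fillings n D) (hab : a ≤ b)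
    (hS : ∀ c ∈ S, ∀ x, F c x ≠ a) : swapIn S a b F ∈ Fillings n D := by
  obtain ⟨hinj, hflag⟩ := hF
  refine ⟨fun c x y hxy => ?_, fun c x => ?_⟩
  · simp only [swapIn] at hxy
    split_ifs at hxy
    exacts [hinj c ((Equiv.injective _) hxy), hinj c hxy]
  · by_cases hc : c ∈ S
    · have hxa := hS c hc x
      simp only [swapIn, hc, if_true, Equiv.swap_apply_def, hxa, if_false]
      split_ifs with hxb
      · exact hab.trans (hxb ▸ hflag c x)
      · exact hflag c x
    · simpa [swapIn, hc] using hflag c x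

theorem colCount_swapIn (S : Finset (Fin n)) (a b : Fin n)
    (F : (j : Fin n) → {i : Fin n // i ∈ D j} → Fin n) (k c : Fin n) :
    colCount (swapIn S a b F) k c
      = if c ∈ S then colCount F (Equiv.swap a b k) c else colCount F k c := by
  unfold colCount swapIn
  split_ifs <;> simp [Equiv.swap_apply_eq_iff]

theorem wt_swapIn_add (S : Finset (Fin n)) (a b : Fin n)
    (F : (j : Fin n) → {i : Fin n // i ∈ D j} → Fin n) (k : Fin n) :
    wt n D (swapIn S a b F) k + ∑ c ∈ S, colCount F k c
      = wt n D F k + ∑ c ∈ S, colCount F (Equiv.swap a b k) c := by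
  simp only [wt_eq_sum_colCount, colCount_swapIn]
  rw [sum_ite, ← sum_filter_not_add_sum_filter univ (· ∈ S) (colCount F k), filter_mem_eq_inter,
    univ_inter]
  omega

theorem wt_swapIn_eq_comp_swap {S : Finset (Fin n)} {a b : Fin n}
    {F : (j : Fin n) → {i : Fin n // i ∈ D j} → Fin n}
    (hS : ∀ c ∈ S, colCount F b c = 1 ∧ colCount F a c = 0)
    (hcard : #S + wt n D F a = wt n D F b) :
    wt n D (swapIn S a b F) = wt n D F ∘ Equiv.swap a b := by
  have hSa : ∑ c ∈ S, colCount F a c = 0 := sum_eq_zero fun c hc => (hS c hc).2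
  have hSb : ∑ c ∈ S, colCount F b c = #S := by
    rw [card_eq_sum_ones]; exact sum_congr rfl fun c hc => (hS c hc).1
  funext k
  have key := wt_swapIn_add S a b F k
  rw [Function.comp_apply]
  rcases eq_or_ne k a with rfl | hka
  · rw [Equiv.swap_apply_left] at key ⊢; omega
  rcases eq_or_ne k b with rfl | hkb
  · rw [Equiv.swap_apply_right] at key ⊢; omega
  rw [Equiv.swap_apply_of_ne_of_ne hka hkb] at key ⊢; omega

theorem exists_card_eq_wt_sub_of_injective {F : (j : Fin n) → {i : Fin n // i ∈ D j} → Fin n}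
    (hF : ∀ c, Function.Injective (F c)) (a b : Fin n) :
    ∃ S : Finset (Fin n), #S = wt n D F b - wt n D F a ∧
      ∀ c ∈ S, colCount F b c = 1 ∧ colCount F a c = 0 := by
  have hle := sum_le_card_filter_add_sum (colCount F b) (colCount F a) (colCount_le_one hF b)
  rw [← wt_eq_sum_colCount, ← wt_eq_sum_colCount] at hle
  obtain ⟨S, hS, hcard⟩ := exists_subset_card_eq
    (s := {c | colCount F b c = 1 ∧ colCount F a c = 0}) (n := wt n D F b - wt n D F a) (by omega)
  exact ⟨S, hcard, fun c hc => (mem_filter.mp (hS hc)).2⟩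

theorem exists_filling_transposed_weight_general (n : ℕ)
    (α : Fin n → ℕ)
    (F : (j : Fin n) → {i : Fin n // i ∈ skyline n α j} → Fin n)
    (hF : F ∈ Fillings n (skyline n α))
    (i j : Fin n) (hij : i < j)
    (hv : wt n (skyline n α) F i < wt n (skyline n α) F j) :
    ∃ F' ∈ Fillings n (skyline n α),
      wt n (skyline n α) F' = wt n (skyline n α) F ∘ Equiv.swap i j := by
  obtain ⟨S, hcard, hS⟩ := exists_card_eq_wt_sub_of_injective hF.1 i j
  exact ⟨swapIn S i j F, swapIn_mem hF hij.le fun c hc => colCount_eq_zero.mp (hS c hc).2,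
    wt_swapIn_eq_comp_swap hS (by omega)⟩

/-- If `F` is a column-strict flagged filling of the skyline diagram `D(α)` with weight
`v = wt F`, and `i < j` with `v i < v j`, then there is a column-strict flagged filling
`F'` of `D(α)` with `wt F' = t_{i,j}(wt F)`. -/
theorem exists_filling_transposed_weight (n : ℕ) (hn : 1 ≤ n)
    (α : Fin n → ℕ) (hα : ∀ i, α i ≤ n)
    (F : (j : Fin n) → {i : Fin n // i ∈ skyline n α j} → Fin n)
    (hF : F ∈ Fillings n (skyline n α))
    (i j : Fin n) (hij : i < j)
    (hv : wt n (skyline n α) F i < wt n (skyline n α) F j) :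
    ∃ F' ∈ Fillings n (skyline n α),
      wt n (skyline n α) F' = wt n (skyline n α) F ∘ Equiv.swap i j :=
  exists_filling_transposed_weight_general n α F hF i j hij hv
end

section
/- Let α ∈ ℤ_{≥0}^n be a composition and F a column-strict flagged filling of the skyline diagram D(α) with weight wt(F) = (v_1,…,v_n). If 1 ≤ i < j ≤ n and v_i < v_j − 1, then there exists a column-strict flagged filling F' of D(α) with wt(F') = m_{i,j}(wt(F)) = wt(F) + e_i − e_j. -/
/-- If `F` is a column-strict flagged filling of the skyline diagram `D(α)` with weight
`v = wt F`, and `i < j` with `v i < v j - 1`, then there is a column-strict flagged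
filling `F'` of `D(α)` with `wt F' = m_{i,j}(wt F) = wt F + e_i - e_j`. -/
theorem exists_filling_moved_weight (n : ℕ) (hn : 1 ≤ n)
    (α : Fin n → ℕ) (hα : ∀ i, α i ≤ n)
    (F : (j : Fin n) → {i : Fin n // i ∈ skyline n α j} → Fin n)
    (hF : F ∈ Fillings n (skyline n α))
    (i j : Fin n) (hij : i < j)
    (hv : wt n (skyline n α) F i + 1 < wt n (skyline n α) F j) :
    ∃ F' ∈ Fillings n (skyline n α),
      wt n (skyline n α) F' =
        Function.update (Function.update (wt n (skyline n α) F) i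
          (wt n (skyline n α) F i + 1)) j (wt n (skyline n α) F j - 1) := by
  classical
  obtain ⟨hinj, hflag⟩ := hF
  have hij' : i ≠ j := ne_of_lt hij
  have hle1 : ∀ (c : Fin n) (k : Fin n),
      ((skyline n α c).attach.filter fun x => F c x = k).card ≤ 1 := by
    intro c k
    refine Finset.card_le_one.mpr ?_
    intro a ha b hb
    rw [Finset.mem_filter] at ha hb
    exact hinj c (ha.2.trans hb.2.symm)
  have hlt : wt n (skyline n α) F i < wt n (skyline n α) F j := by omega
  have hlt' : (∑ c, ((skyline n α c).attach.filter fun x => F c x = i).card)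
      < ∑ c, ((skyline n α c).attach.filter fun x => F c x = j).card := hlt
  obtain ⟨c, -, hc⟩ := Finset.exists_lt_of_sum_lt hlt'
  have hci : ((skyline n α c).attach.filter fun x => F c x = i).card = 0 := by
    have := hle1 c j; omega
  have hcj : ((skyline n α c).attach.filter fun x => F c x = j).card = 1 := by
    have := hle1 c j; omega
  obtain ⟨b, hb⟩ := Finset.card_eq_one.mp hcj
  have hbmem : b ∈ (skyline n α c).attach.filter fun x => F c x = j := by
    rw [hb]; exact Finset.mem_singleton_self b
  have hbj : F c b = j := (Finset.mem_filter.mp hbmem).2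
  have hnoi : ∀ x : {x : Fin n // x ∈ skyline n α c}, F c x ≠ i := by
    intro x hx
    have hxmem : x ∈ (skyline n α c).attach.filter fun y => F c y = i :=
      Finset.mem_filter.mpr ⟨Finset.mem_attach _ x, hx⟩
    rw [Finset.card_eq_zero] at hci
    simp [hci] at hxmem
  set F' := Function.update F c (Function.update (F c) b i) with hF'def
  have hF'c : F' c = Function.update (F c) b i := Function.update_self _ _ _
  have hF'ne : ∀ c' : Fin n, c' ≠ c → F' c' = F c' := fun c' h =>
    Function.update_of_ne h _ _
  refine ⟨F', ⟨?_, ?_⟩, ?_⟩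
  · -- column-strict
    intro c'
    by_cases h : c' = c
    · subst h
      rw [hF'c]
      intro x y hxy
      rw [Function.update_apply, Function.update_apply] at hxy
      by_cases hx : x = b <;> by_cases hy : y = b <;> simp [hx, hy] at hxy ⊢
      · exact absurd hxy.symm (hnoi y)
      · exact absurd hxy (hnoi x)
      · exact hinj c' hxy
    · rw [hF'ne c' h]; exact hinj c'
  · -- flagged
    intro c' x
    by_cases h : c' = c
    · subst h
      rw [hF'c, Function.update_apply]
      split
      · next hx =>
        subst hx
        have hjx : (j : Fin n) ≤ (x : Fin n) := hbj ▸ hflag c' x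
        exact le_of_lt (lt_of_lt_of_le hij hjx)
      · exact hflag c' x
    · rw [hF'ne c' h]; exact hflag c' x
  · -- weight
    have hsplit : ∀ (G : (c' : Fin n) → {x : Fin n // x ∈ skyline n α c'} → Fin n) (k : Fin n),
        wt n (skyline n α) G k = ((skyline n α c).attach.filter fun x => G c x = k).card
          + ∑ c' ∈ Finset.univ.erase c,
              ((skyline n α c').attach.filter fun x => G c' x = k).card := by
      intro G k
      exact (Finset.add_sum_erase Finset.univ _ (Finset.mem_univ c)).symm
    have hrest : ∀ k : Fin n, (∑ c' ∈ Finset.univ.erase c,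
        ((skyline n α c').attach.filter fun x => F' c' x = k).card)
        = ∑ c' ∈ Finset.univ.erase c,
            ((skyline n α c').attach.filter fun x => F c' x = k).card := by
      intro k
      refine Finset.sum_congr rfl fun c' hc' => ?_
      rw [hF'ne c' (Finset.ne_of_mem_erase hc')]
    funext k
    rcases eq_or_ne k j with rfl | hk
    · rw [Function.update_self]
      have hnew : ((skyline n α c).attach.filter fun x => F' c x = k).card = 0 := by
        rw [Finset.card_eq_zero, Finset.filter_eq_empty_iff]
        intro x _
        rw [hF'c, Function.update_apply]
        split
        · next hx => exact fun h => hij' h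
        · next hx => intro h; exact hx (hinj c (h.trans hbj.symm))
      rw [hsplit F', hrest, hnew, hsplit F k, hcj]
      omega
    · rw [Function.update_of_ne hk]
      rcases eq_or_ne k i with rfl | hk'
      · rw [Function.update_self]
        have hnew : ((skyline n α c).attach.filter fun x => F' c x = k).card = 1 := by
          have heq : ((skyline n α c).attach.filter fun x => F' c x = k) = {b} := by
            ext x
            rw [Finset.mem_filter, Finset.mem_singleton, hF'c, Function.update_apply]
            constructor
            · rintro ⟨-, hx⟩
              by_contra hxb
              rw [if_neg hxb] at hx
              exact hnoi x hx
            · rintro rfl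
              exact ⟨Finset.mem_attach _ _, by rw [if_pos rfl]⟩
          rw [heq, Finset.card_singleton]
        rw [hsplit F', hrest, hnew, hsplit F k, hci]
        omega
      · rw [Function.update_of_ne hk']
        have hnew : ((skyline n α c).attach.filter fun x => F' c x = k)
            = ((skyline n α c).attach.filter fun x => F c x = k) := by
          ext x
          rw [Finset.mem_filter, Finset.mem_filter, hF'c, Function.update_apply]
          by_cases hx : x = b
          · subst hx
            rw [if_pos rfl, hbj]
            constructor
            · rintro ⟨-, h⟩; exact absurd h.symm hk'
            · rintro ⟨-, h⟩; exact absurd h.symm hk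
          · rw [if_neg hx]
        rw [hsplit F', hrest, hnew, hsplit F k]
end

section
/- Let α ∈ ℤ_{≥0}^n be a composition. The filling F_0 of the skyline diagram D(α) in which every box (i,j) is filled with its row index i is the unique column-strict flagged filling of D(α) with weight equal to α. -/
lemma auxA (n m : ℕ) (h : m ≤ n) :
    (Finset.univ.filter fun j : Fin n => (j : ℕ) < m).card = m := by
  rw [Finset.card_filter, Fin.sum_univ_eq_sum_range (fun j => if j < m then 1 else 0),
    ← Finset.card_filter]
  have : (Finset.range n).filter (fun j => j < m) = Finset.range m := by
    ext x; simp [Finset.mem_range]; omega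
  rw [this, Finset.card_range]

lemma auxFiber (n : ℕ) (s : Finset (Fin n)) (k : Fin n) :
    (s.attach.filter fun i : {x // x ∈ s} => (i : Fin n) = k).card
      = if k ∈ s then 1 else 0 := by
  rw [Finset.card_filter]
  rw [Finset.sum_attach s (fun i => if i = k then 1 else 0)]
  simp [Finset.sum_ite_eq' s k (fun _ => 1)]

lemma auxLe (n : ℕ) (s : Finset (Fin n)) (f : {i : Fin n // i ∈ s} → Fin n) (K : Fin n) :
    (s.attach.filter fun i => f i ≤ K).card
      = ∑ k ∈ Finset.Iic K, (s.attach.filter fun i => f i = k).card := by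
  rw [Finset.card_eq_sum_card_fiberwise (f := f) (t := Finset.Iic K)
    (fun x hx => by simpa using (Finset.mem_filter.mp hx).2)]
  refine Finset.sum_congr rfl fun k hk => ?_
  congr 1
  rw [Finset.filter_filter]
  refine Finset.filter_congr fun i _ => ?_
  simp only [Finset.mem_Iic] at hk
  constructor
  · exact fun h => h.2
  · exact fun h => ⟨h ▸ hk, h⟩


/-- The filling of the skyline diagram `D(α)` in which every box is filled with its row
index is the unique column-strict flagged filling of `D(α)` of weight `α`. -/
theorem rowFilling_unique (n : ℕ) (hn : 1 ≤ n) (α : Fin n → ℕ) (hα : ∀ i, α i ≤ n) :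
    (fun j (i : {i : Fin n // i ∈ skyline n α j}) => (i : Fin n)) ∈
        Fillings n (skyline n α) ∧
      wt n (skyline n α) (fun j (i : {i : Fin n // i ∈ skyline n α j}) => (i : Fin n)) = α ∧
      ∀ F ∈ Fillings n (skyline n α), wt n (skyline n α) F = α →
        F = fun j (i : {i : Fin n // i ∈ skyline n α j}) => (i : Fin n) := by
  set D := skyline n α with hD
  have h2 : wt n D (fun j (i : {i : Fin n // i ∈ D j}) => (i : Fin n)) = α := by
    funext k
    show (∑ j, ((D j).attach.filter fun i : {x // x ∈ D j} => (i : Fin n) = k).card) = α k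
    have : ∀ j, ((D j).attach.filter fun i : {x // x ∈ D j} => (i : Fin n) = k).card
        = if (j : ℕ) < α k then 1 else 0 := by
      intro j
      rw [auxFiber]
      congr 1
      simp [hD, skyline]
    rw [Finset.sum_congr rfl fun j _ => this j, ← Finset.card_filter]
    exact auxA n (α k) (hα k)
  refine ⟨⟨fun j a b h => Subtype.ext h, fun j i => le_refl _⟩, h2, ?_⟩
  rintro F ⟨hinj, hflag⟩ hwt
  have key : ∀ (j : Fin n) (i : {x // x ∈ D j}), (i : Fin n) ≤ F j i := by
    have hsum : ∀ K : Fin n,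
        (∑ j, ((D j).attach.filter fun i => F j i ≤ K).card)
          = ∑ j, ((D j).attach.filter fun i : {x // x ∈ D j} => (i : Fin n) ≤ K).card := by
      intro K
      calc (∑ j, ((D j).attach.filter fun i => F j i ≤ K).card)
          = ∑ j, ∑ k ∈ Finset.Iic K, ((D j).attach.filter fun i => F j i = k).card :=
            Finset.sum_congr rfl fun j _ => auxLe n (D j) (F j) K
        _ = ∑ k ∈ Finset.Iic K, wt n D F k := Finset.sum_comm
        _ = ∑ k ∈ Finset.Iic K,
              wt n D (fun j (i : {i : Fin n // i ∈ D j}) => (i : Fin n)) k := by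
            rw [hwt, h2]
        _ = ∑ j, ∑ k ∈ Finset.Iic K,
              ((D j).attach.filter fun i : {x // x ∈ D j} => (i : Fin n) = k).card :=
            Finset.sum_comm
        _ = _ := (Finset.sum_congr rfl fun j _ =>
            (auxLe n (D j) (fun i => (i : Fin n)) K)).symm
    intro j i
    have hsubset : ∀ (K : Fin n) (j : Fin n),
        ((D j).attach.filter fun i : {x // x ∈ D j} => (i : Fin n) ≤ K)
          ⊆ ((D j).attach.filter fun i => F j i ≤ K) := fun K j => by
      intro x hx
      simp only [Finset.mem_filter, Finset.mem_attach, true_and] at hx ⊢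
      exact le_trans (hflag j x) hx
    set K := F j i with hK
    have hcards : ∀ j' : Fin n,
        ((D j').attach.filter fun i : {x // x ∈ D j'} => (i : Fin n) ≤ K).card
          = ((D j').attach.filter fun i => F j' i ≤ K).card := by
      have := (Finset.sum_eq_sum_iff_of_le (s := Finset.univ)
        (f := fun j' => ((D j').attach.filter fun i : {x // x ∈ D j'} => (i : Fin n) ≤ K).card)
        (g := fun j' => ((D j').attach.filter fun i => F j' i ≤ K).card)
        (fun j' _ => Finset.card_le_card (hsubset K j'))).mp (hsum K).symm
      exact fun j' => this j' (Finset.mem_univ j')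
    have heq : ((D j).attach.filter fun i : {x // x ∈ D j} => (i : Fin n) ≤ K)
        = ((D j).attach.filter fun i => F j i ≤ K) :=
      Finset.eq_of_subset_of_card_le (hsubset K j) (le_of_eq (hcards j).symm)
    have : i ∈ ((D j).attach.filter fun i => F j i ≤ K) := by
      simp [Finset.mem_filter, hK]
    rw [← heq] at this
    simpa using this
  funext j i
  exact le_antisymm (hflag j i) (key j i)
end

section
/- Let Y be the n×n upper-triangular matrix over the polynomial ring ℂ[y_{ij} : 1 ≤ i ≤ j ≤ n] whose (i,j) entry is the indeterminate y_{ij} for i ≤ j and 0 for i > j. For subsets R, S ⊆ [n] with |R| = |S|, the determinant of the submatrix Y_S^R of Y with row indices in R and column indices in S is nonzero if and only if R ≤ S, i.e., for each k the k-th smallest element of R is at most the k-th smallest element of S. -/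
/-- The generic `n × n` upper-triangular matrix `Y`: its `(i, j)` entry is the
indeterminate `y_{ij}` for `i ≤ j` and `0` for `i > j`, over `ℂ`. -/
noncomputable def ytMatrix (n : ℕ) :
    Matrix (Fin n) (Fin n) (MvPolynomial (Fin n × Fin n) ℂ) :=
  fun i j => if i ≤ j then MvPolynomial.X (i, j) else 0

/-!
Expand the minor by the Leibniz formula. If `R ≤ S` fails at some position, every permutation
`σ` hits an entry below the diagonal of `Y` (a pigeonhole argument on monotone sequences), so
every term vanishes. If `R ≤ S`, let `r_a, s_a` be the `a`-th smallest elements of `R, S`;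
setting `y_{ij} = 1` exactly at the positions `(r_a, s_a)` and `0` elsewhere specialises the
minor to the identity matrix, so its determinant is a polynomial taking the value `1`.
-/

theorem Monotone.le_of_le_comp_perm {α : Type*} [Preorder α] {k : ℕ} {r s : Fin k → α}
    (hr : Monotone r) (hs : Monotone s) (σ : Equiv.Perm (Fin k)) (h : ∀ a, r a ≤ s (σ a))
    (a : Fin k) : r a ≤ s a := by
  -- `σ` cannot map `[a, k)` into the smaller set `(a, k)`
  obtain ⟨b, hab, hσb⟩ : ∃ b, a ≤ b ∧ σ b ≤ a := by
    by_contra! h'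
    have := Finset.card_le_card_of_injOn σ (s := Finset.Ici a) (t := Finset.Ioi a)
      (fun x hx => by simpa using h' x (by simpa using hx)) σ.injective.injOn
    rw [Fin.card_Ici, Fin.card_Ioi] at this
    omega
  exact (hr hab).trans ((h b).trans (hs hσb))

theorem finsetLe_iff_forall_orderEmbOfFin_le {n k : ℕ} {R S : Finset (Fin n)}
    (hR : R.card = k) (hS : S.card = k) :
    FinsetLe n R S ↔ ∀ a, R.orderEmbOfFin hR a ≤ S.orderEmbOfFin hS a := by
  simp only [FinsetLe, Finset.orderEmbOfFin_apply, List.get_eq_getElem, Finset.length_sort,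
    hR, hS, true_and]
  exact ⟨fun h a => h a a.2 a.2, fun h j hj _ => h ⟨j, hj⟩⟩

open MvPolynomial Matrix

theorem det_submatrix_ytMatrix_eq_zero {n k : ℕ} {r s : Fin k → Fin n}
    (hr : Monotone r) (hs : Monotone s) (h : ¬ ∀ a, r a ≤ s a) :
    ((ytMatrix n).submatrix r s).det = 0 := by
  refine (det_apply _).trans (Finset.sum_eq_zero fun σ _ => ?_)
  obtain ⟨a, ha⟩ : ∃ a, ¬ r (σ a) ≤ s a := by
    by_contra! h'
    exact h (hr.le_of_le_comp_perm hs σ.symm fun a => by simpa using h' (σ.symm a))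
  rw [Finset.prod_eq_zero (Finset.mem_univ a) (by simp [ytMatrix, ha]), smul_zero]

theorem map_eval_submatrix_ytMatrix_eq_one {n k : ℕ} {r s : Fin k → Fin n}
    (hr : r.Injective) (hs : s.Injective) (h : ∀ a, r a ≤ s a) :
    (eval fun p => if ∃ c, (r c, s c) = p then 1 else 0).mapMatrix
      ((ytMatrix n).submatrix r s) = 1 := by
  ext a b
  have hdiag : (∃ c, r c = r a ∧ s c = s b) ↔ a = b := by
    constructor
    · rintro ⟨c, hca, hcb⟩
      exact (hr hca).symm.trans (hs hcb)
    · rintro rfl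
      exact ⟨a, rfl, rfl⟩
  by_cases hab : a = b
  · subst hab
    simpa [ytMatrix, h a] using hdiag.2 rfl
  · simp [ytMatrix, apply_ite, hdiag, hab]

theorem det_submatrix_ytMatrix_ne_zero {n k : ℕ} {r s : Fin k → Fin n}
    (hr : r.Injective) (hs : s.Injective) (h : ∀ a, r a ≤ s a) :
    ((ytMatrix n).submatrix r s).det ≠ 0 := by
  intro h0
  have := congrArg det (map_eval_submatrix_ytMatrix_eq_one hr hs h)
  rw [← RingHom.map_det, h0, map_zero, det_one] at this
  exact zero_ne_one this

theorem det_submatrix_ytMatrix_ne_zero_iff_general (n k : ℕ)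
    (R S : Finset (Fin n)) (hR : R.card = k) (hS : S.card = k) :
    ((ytMatrix n).submatrix (fun a : Fin k => R.orderEmbOfFin hR a)
        (fun b : Fin k => S.orderEmbOfFin hS b)).det ≠ 0 ↔
      FinsetLe n R S := by
  rw [finsetLe_iff_forall_orderEmbOfFin_le hR hS]
  refine ⟨fun hdet => ?_, det_submatrix_ytMatrix_ne_zero (R.orderEmbOfFin hR).injective
    (S.orderEmbOfFin hS).injective⟩
  by_contra h
  exact hdet (det_submatrix_ytMatrix_eq_zero (R.orderEmbOfFin hR).monotone
    (S.orderEmbOfFin hS).monotone h)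

/-- For `R, S ⊆ [n]` with `|R| = |S| = k`, the minor of `Y` with rows `R` and columns `S`
is nonzero if and only if `R ≤ S`. -/
theorem det_submatrix_ytMatrix_ne_zero_iff (n k : ℕ) (hn : 1 ≤ n)
    (R S : Finset (Fin n)) (hR : R.card = k) (hS : S.card = k) :
    ((ytMatrix n).submatrix (fun a : Fin k => R.orderEmbOfFin hR a)
        (fun b : Fin k => S.orderEmbOfFin hS b)).det ≠ 0 ↔
      FinsetLe n R S :=
  det_submatrix_ytMatrix_ne_zero_iff_general n k R S hR hS
end
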